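/- For every r ≥ 0 with r ≠ R₁, the function f is twice differentiable at r (with the one-sided derivative at r = 0) and satisfies the differential inequality f''(r) − r κ(r) f'(r)/4 ≤ −c f(r)/2. -/

import Mathlib

/-!
By the fundamental theorem of calculus `f' = φ g`. Below `R₁`, `φ' = -(r κ₋ / 4) φ` and
`g' = -(c/2) Φ/φ`, so `f'' - r κ f'/4 = -(r max(κ, 0)/4) φ g - (c/2) Φ ≤ -(c/2) f`, since
`0 ≤ g ≤ 1` gives `f ≤ Φ`. Beyond `R₁ ≥ R₀` we have `κ ≥ 0`, so `φ` is constant, `g = 1/2`,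
`f'' = 0`, and the claim becomes `c f ≤ r κ φ / 4`. There `Φ/φ` is affine,
`Φ(s)/φ(s) = A + (s - R₀)` with `A = Φ(R₀)/φ(R₀) ≥ R₀` because `φ` is decreasing; this bounds
`1/c = ∫₀^{R₁} Φ/φ` below by `(R₁ - R₀)(A + (R₁ - R₀)/2)`, and together with
`R₁ (R₁ - R₀) κ(r) ≥ 8` it gives `4 Φ(r)/φ(r) ≤ r κ(r) / c`.
-/

open MeasureTheory Real Set
open scoped RealInnerProductSpace

/-- `φ(r) = exp(−(1/4) ∫₀^r s κ₋(s) ds)` where `κ₋ = max(0, −κ)`. -/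
noncomputable def phiF (κ : ℝ → ℝ) (r : ℝ) : ℝ :=
  Real.exp (-(1 / 4) * ∫ s in (0:ℝ)..r, s * max 0 (-κ s))

/-- `Φ(r) = ∫₀^r φ(s) ds`. -/
noncomputable def PhiF (κ : ℝ → ℝ) (r : ℝ) : ℝ := ∫ s in (0:ℝ)..r, phiF κ s

/-- `R₀ = inf {s ≥ 0 : κ(r) ≥ 0 for all r ≥ s}`. -/
noncomputable def R0 (κ : ℝ → ℝ) : ℝ := sInf {s : ℝ | 0 ≤ s ∧ ∀ r, s ≤ r → 0 ≤ κ r}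

/-- `R₁ = inf {s ≥ R₀ : s(s − R₀)κ(r) ≥ 8 for all r ≥ s}`. -/
noncomputable def R1 (κ : ℝ → ℝ) : ℝ :=
  sInf {s : ℝ | R0 κ ≤ s ∧ ∀ r, s ≤ r → 8 ≤ s * (s - R0 κ) * κ r}

/-- `c = (∫₀^{R₁} Φ(s) φ(s)⁻¹ ds)⁻¹`. -/
noncomputable def cF (κ : ℝ → ℝ) : ℝ := (∫ s in (0:ℝ)..R1 κ, PhiF κ s / phiF κ s)⁻¹

/-- `g(r) = 1 − (c/2) ∫₀^{min(r,R₁)} Φ(s) φ(s)⁻¹ ds`. -/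
noncomputable def gF (κ : ℝ → ℝ) (r : ℝ) : ℝ :=
  1 - cF κ / 2 * ∫ s in (0:ℝ)..min r (R1 κ), PhiF κ s / phiF κ s

/-- `f(r) = ∫₀^r φ(s) g(s) ds`. -/
noncomputable def fF (κ : ℝ → ℝ) (r : ℝ) : ℝ := ∫ s in (0:ℝ)..r, phiF κ s * gF κ s

open intervalIntegral Filter Topology

theorem ContinuousOn.intervalIntegrable_of_Ici {F : ℝ → ℝ} {a x y : ℝ}
    (hF : ContinuousOn F (Ici a)) (hx : a ≤ x) (hy : a ≤ y) :
    IntervalIntegrable F volume x y :=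
  (hF.mono fun _ ht => le_trans (le_inf hx hy) ht.1).intervalIntegrable

theorem hasDerivWithinAt_integral_Ici {F : ℝ → ℝ} {a r : ℝ} (hF : ContinuousOn F (Ici a))
    (hr : a ≤ r) : HasDerivWithinAt (fun u => ∫ x in a..u, F x) (F r) (Ici a) r := by
  -- Mathlib's FTC needs an `FTCFilter` instance, available for `𝓝[Icc a b] r` but not `𝓝[Ici a] r`.
  have hr' : r ∈ Icc a (r + 1) := ⟨hr, by linarith⟩
  have : Fact (r ∈ Icc a (r + 1)) := ⟨hr'⟩
  have hF' : ContinuousOn F (Icc a (r + 1)) := hF.mono Icc_subset_Ici_self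
  refine (integral_hasDerivWithinAt_right (s := Icc a (r + 1)) (t := Icc a (r + 1))
    (hF.intervalIntegrable_of_Ici le_rfl hr)
    (hF'.stronglyMeasurableAtFilter_nhdsWithin measurableSet_Icc r) (hF' r hr')
    ).mono_of_mem_nhdsWithin ?_
  rw [← Ici_inter_Iic]
  exact inter_mem_nhdsWithin _ (Iic_mem_nhds (by linarith))

theorem four_mul_add_sub_le_mul {a b r A K k : ℝ} (ha : 0 ≤ a) (hab : a ≤ b) (hbr : b < r)
    (hA : a ≤ A) (hK : (b - a) * (A + (b - a) / 2) ≤ K) (hk : 8 ≤ b * (b - a) * k) :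
    4 * (A + (r - a)) ≤ K * (r * k) := by
  have hk0 : 0 < k := by
    by_contra! h
    nlinarith [mul_nonneg (ha.trans hab) (sub_nonneg.2 hab)]
  have hb : 0 < b := by
    by_contra! h
    nlinarith [mul_nonneg (mul_nonneg (neg_nonneg.2 h) (sub_nonneg.2 hab)) hk0.le]
  have hr : 0 ≤ r := by linarith
  have hupper : 8 * (r * (A + (b - a) / 2)) ≤ b * (K * (r * k)) :=
    calc 8 * (r * (A + (b - a) / 2))
        ≤ b * (b - a) * k * (r * (A + (b - a) / 2)) := by
          gcongr
          nlinarith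
      _ = b * r * ((b - a) * (A + (b - a) / 2) * k) := by ring
      _ ≤ b * r * (K * k) := by gcongr
      _ = b * (K * (r * k)) := by ring
  have hlower : b * (4 * (A + (r - a))) ≤ 8 * (r * (A + (b - a) / 2)) := by
    nlinarith [mul_nonneg (sub_nonneg.2 hA) (sub_nonneg.2 hbr.le), mul_nonneg (ha.trans hA) hr]
  exact le_of_mul_le_mul_left (hlower.trans hupper) hb

section

variable {κ : ℝ → ℝ} {r : ℝ}

theorem R0_nonneg (κ : ℝ → ℝ) : 0 ≤ R0 κ := Real.sInf_nonneg fun _ hs => hs.1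

-- `sInf ∅ = 0` in `ℝ`, so `0 < R₁` can only hold if the set defining `R₁` is nonempty.
theorem R1_set_nonempty (hR1 : 0 < R1 κ) :
    {s : ℝ | R0 κ ≤ s ∧ ∀ r, s ≤ r → 8 ≤ s * (s - R0 κ) * κ r}.Nonempty :=
  nonempty_iff_ne_empty.2 fun h => hR1.ne' (by rw [R1, h, Real.sInf_empty])

theorem R1_nonneg (κ : ℝ → ℝ) : 0 ≤ R1 κ := Real.sInf_nonneg fun _ hs => (R0_nonneg κ).trans hs.1

theorem R0_le_R1 (hR1 : 0 < R1 κ) : R0 κ ≤ R1 κ :=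
  le_csInf (R1_set_nonempty hR1) fun _ hs => hs.1

theorem R0_set_nonempty (hR1 : 0 < R1 κ) :
    {s : ℝ | 0 ≤ s ∧ ∀ r, s ≤ r → 0 ≤ κ r}.Nonempty := by
  obtain ⟨s, hR0s, hs⟩ := R1_set_nonempty hR1
  have h0s : 0 ≤ s := (R0_nonneg κ).trans hR0s
  refine ⟨s, h0s, fun r hr => ?_⟩
  by_contra! hneg
  nlinarith [hs r hr, mul_nonneg h0s (sub_nonneg.2 hR0s)]

theorem kappa_nonneg_of_R0_lt (hR1 : 0 < R1 κ) (hr : R0 κ < r) : 0 ≤ κ r := by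
  obtain ⟨s, hs, hsr⟩ := exists_lt_of_csInf_lt (R0_set_nonempty hR1) hr
  exact hs.2 r hsr.le

theorem eight_le_R1_mul_kappa (hR1 : 0 < R1 κ) (hr : R1 κ < r) :
    8 ≤ R1 κ * (R1 κ - R0 κ) * κ r := by
  have hκr : 0 ≤ κ r := kappa_nonneg_of_R0_lt hR1 ((R0_le_R1 hR1).trans_lt hr)
  have hlim : Tendsto (fun s => s * (s - R0 κ) * κ r) (𝓝[>] R1 κ)
      (𝓝 (R1 κ * (R1 κ - R0 κ) * κ r)) :=
    (Continuous.tendsto (by fun_prop) _).mono_left nhdsWithin_le_nhds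
  refine ge_of_tendsto hlim ?_
  filter_upwards [Ioo_mem_nhdsGT hr] with s hs
  obtain ⟨t, ht, hts⟩ := exists_lt_of_csInf_lt (R1_set_nonempty hR1) hs.1
  have h0t : 0 ≤ t - R0 κ := sub_nonneg.2 ht.1
  calc 8 ≤ t * (t - R0 κ) * κ r := ht.2 r (by linarith [hs.2])
    _ ≤ s * (s - R0 κ) * κ r := by
      gcongr
      linarith [R0_nonneg κ]

theorem continuousOn_mul_negPart (hκ : ContinuousOn κ (Ici 0)) :
    ContinuousOn (fun s => s * max 0 (-κ s)) (Ici 0) :=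
  continuousOn_id.mul (continuousOn_const.sup hκ.neg)

theorem phiF_pos (r : ℝ) : 0 < phiF κ r := exp_pos _

theorem hasDerivWithinAt_phiF (hκ : ContinuousOn κ (Ici 0)) (hr : 0 ≤ r) :
    HasDerivWithinAt (phiF κ) (-(1 / 4) * (r * max 0 (-κ r)) * phiF κ r) (Ici 0) r := by
  convert ((hasDerivWithinAt_integral_Ici (continuousOn_mul_negPart hκ) hr).const_mul
    (-(1 / 4) : ℝ)).exp using 1
  · rfl
  · rw [phiF]
    ring

theorem continuousOn_phiF (hκ : ContinuousOn κ (Ici 0)) : ContinuousOn (phiF κ) (Ici 0) :=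
  fun _ hr => (hasDerivWithinAt_phiF hκ hr).continuousWithinAt

theorem antitoneOn_phiF (hκ : ContinuousOn κ (Ici 0)) : AntitoneOn (phiF κ) (Ici 0) := by
  intro a ha b hb hab
  have hw := continuousOn_mul_negPart hκ
  have hnonneg : 0 ≤ ∫ s in a..b, s * max 0 (-κ s) :=
    integral_nonneg hab fun s hs => mul_nonneg (le_trans ha hs.1) (le_max_left _ _)
  rw [phiF, phiF, ← integral_add_adjacent_intervals (hw.intervalIntegrable_of_Ici le_rfl ha)
    (hw.intervalIntegrable_of_Ici ha hb)]
  exact exp_le_exp.2 (by linarith)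

theorem phiF_eq_of_R0_le (hκ : ContinuousOn κ (Ici 0)) (hR1 : 0 < R1 κ) (hr : R0 κ ≤ r) :
    phiF κ r = phiF κ (R0 κ) := by
  have hw := continuousOn_mul_negPart hκ
  have h0 := R0_nonneg κ
  have hzero : ∫ s in R0 κ..r, s * max 0 (-κ s) = 0 := by
    rw [intervalIntegral.integral_congr_ae (g := fun _ => 0) ?_, intervalIntegral.integral_zero]
    refine Eventually.of_forall fun s hs => ?_
    rw [uIoc_of_le hr] at hs
    simp [kappa_nonneg_of_R0_lt hR1 hs.1]
  rw [phiF, phiF, ← integral_add_adjacent_intervals (hw.intervalIntegrable_of_Ici le_rfl h0)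
    (hw.intervalIntegrable_of_Ici h0 (h0.trans hr)), hzero, add_zero]

theorem mul_phiF_le_PhiF (hκ : ContinuousOn κ (Ici 0)) (hr : 0 ≤ r) :
    r * phiF κ r ≤ PhiF κ r := by
  simpa [PhiF] using integral_mono_on hr intervalIntegrable_const
    ((continuousOn_phiF hκ).intervalIntegrable_of_Ici le_rfl hr)
    fun s hs => antitoneOn_phiF hκ hs.1 hr hs.2

theorem le_PhiF_div_phiF (hκ : ContinuousOn κ (Ici 0)) (hr : 0 ≤ r) :
    r ≤ PhiF κ r / phiF κ r :=
  (le_div_iff₀ (phiF_pos r)).2 (mul_phiF_le_PhiF hκ hr)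

theorem PhiF_eq_of_R0_le (hκ : ContinuousOn κ (Ici 0)) (hR1 : 0 < R1 κ) (hr : R0 κ ≤ r) :
    PhiF κ r = PhiF κ (R0 κ) + (r - R0 κ) * phiF κ (R0 κ) := by
  have hφ := continuousOn_phiF hκ
  have h0 := R0_nonneg κ
  have hconst : ∫ s in R0 κ..r, phiF κ s = (r - R0 κ) * phiF κ (R0 κ) := by
    rw [integral_congr (g := fun _ => phiF κ (R0 κ)) fun s hs => ?_,
      intervalIntegral.integral_const, smul_eq_mul]
    rw [uIcc_of_le hr] at hs
    exact phiF_eq_of_R0_le hκ hR1 hs.1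
  rw [PhiF, PhiF, ← integral_add_adjacent_intervals (hφ.intervalIntegrable_of_Ici le_rfl h0)
    (hφ.intervalIntegrable_of_Ici h0 (h0.trans hr)), hconst]

theorem PhiF_div_phiF_eq_of_R0_le (hκ : ContinuousOn κ (Ici 0)) (hR1 : 0 < R1 κ)
    (hr : R0 κ ≤ r) :
    PhiF κ r / phiF κ r = PhiF κ (R0 κ) / phiF κ (R0 κ) + (r - R0 κ) := by
  rw [PhiF_eq_of_R0_le hκ hR1 hr, phiF_eq_of_R0_le hκ hR1 hr, add_div,
    mul_div_cancel_right₀ _ (phiF_pos _).ne']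

theorem continuousOn_PhiF (hκ : ContinuousOn κ (Ici 0)) : ContinuousOn (PhiF κ) (Ici 0) :=
  fun _ hr => (hasDerivWithinAt_integral_Ici (continuousOn_phiF hκ) hr).continuousWithinAt

theorem continuousOn_PhiF_div_phiF (hκ : ContinuousOn κ (Ici 0)) :
    ContinuousOn (fun s => PhiF κ s / phiF κ s) (Ici 0) :=
  (continuousOn_PhiF hκ).div (continuousOn_phiF hκ) fun _ _ => (phiF_pos _).ne'

theorem PhiF_div_phiF_nonneg (hr : 0 ≤ r) : 0 ≤ PhiF κ r / phiF κ r :=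
  div_nonneg (integral_nonneg hr fun s _ => (phiF_pos s).le) (phiF_pos r).le

theorem cF_nonneg (κ : ℝ → ℝ) : 0 ≤ cF κ :=
  inv_nonneg.2 (integral_nonneg (R1_nonneg κ) fun _ hs => PhiF_div_phiF_nonneg hs.1)

theorem integral_PhiF_div_phiF_pos (hκ : ContinuousOn κ (Ici 0)) (hR1 : 0 < R1 κ) :
    0 < ∫ s in (0:ℝ)..R1 κ, PhiF κ s / phiF κ s :=
  intervalIntegral_pos_of_pos_on
    ((continuousOn_PhiF_div_phiF hκ).intervalIntegrable_of_Ici le_rfl hR1.le)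
    (fun _ hs => hs.1.trans_le (le_PhiF_div_phiF hκ hs.1.le)) hR1

theorem cF_mul_integral_PhiF_div_phiF (hκ : ContinuousOn κ (Ici 0)) (hR1 : 0 < R1 κ) :
    cF κ * ∫ s in (0:ℝ)..R1 κ, PhiF κ s / phiF κ s = 1 :=
  inv_mul_cancel₀ (integral_PhiF_div_phiF_pos hκ hR1).ne'

theorem R1_sub_R0_mul_le_integral_PhiF_div_phiF (hκ : ContinuousOn κ (Ici 0)) (hR1 : 0 < R1 κ) :
    (R1 κ - R0 κ) * (PhiF κ (R0 κ) / phiF κ (R0 κ) + (R1 κ - R0 κ) / 2) ≤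
      ∫ s in (0:ℝ)..R1 κ, PhiF κ s / phiF κ s := by
  have hq := continuousOn_PhiF_div_phiF hκ
  have h0 := R0_nonneg κ
  have h01 := R0_le_R1 hR1
  have hhead : 0 ≤ ∫ s in (0:ℝ)..R0 κ, PhiF κ s / phiF κ s :=
    integral_nonneg h0 fun _ hs => PhiF_div_phiF_nonneg hs.1
  have htail : ∫ s in R0 κ..R1 κ, PhiF κ s / phiF κ s =
      (R1 κ - R0 κ) * (PhiF κ (R0 κ) / phiF κ (R0 κ) + (R1 κ - R0 κ) / 2) := by
    rw [integral_congr (g := fun s => PhiF κ (R0 κ) / phiF κ (R0 κ) + (s - R0 κ)) fun s hs => ?_]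
    · simp only [intervalIntegrable_const, intervalIntegrable_id, IntervalIntegrable.sub,
        intervalIntegral.integral_add, intervalIntegral.integral_div,
        intervalIntegral.integral_const, smul_eq_mul, intervalIntegral.integral_sub, integral_id]
      ring
    · rw [uIcc_of_le h01] at hs
      exact PhiF_div_phiF_eq_of_R0_le hκ hR1 hs.1
  rw [← integral_add_adjacent_intervals (hq.intervalIntegrable_of_Ici le_rfl h0)
    (hq.intervalIntegrable_of_Ici h0 (h0.trans h01)), htail]
  linarith

theorem gF_of_R1_le (hκ : ContinuousOn κ (Ici 0)) (hR1 : 0 < R1 κ) (hr : R1 κ ≤ r) :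
    gF κ r = 1 / 2 := by
  rw [gF, min_eq_right hr]
  linear_combination (-1 / 2 : ℝ) * cF_mul_integral_PhiF_div_phiF hκ hR1

theorem one_half_le_gF (hκ : ContinuousOn κ (Ici 0)) (hR1 : 0 < R1 κ) (hr : 0 ≤ r) :
    1 / 2 ≤ gF κ r := by
  have hmono : ∫ s in (0:ℝ)..min r (R1 κ), PhiF κ s / phiF κ s ≤
      ∫ s in (0:ℝ)..R1 κ, PhiF κ s / phiF κ s :=
    integral_mono_interval le_rfl (le_min hr hR1.le) (min_le_right _ _)
      ((ae_restrict_iff' measurableSet_Ioc).2 (Eventually.of_forall fun _ hs =>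
        PhiF_div_phiF_nonneg hs.1.le))
      ((continuousOn_PhiF_div_phiF hκ).intervalIntegrable_of_Ici le_rfl hR1.le)
  have hc := mul_le_mul_of_nonneg_left hmono (cF_nonneg κ)
  rw [gF]
  linarith [cF_mul_integral_PhiF_div_phiF hκ hR1]

theorem gF_le_one (hr : 0 ≤ r) : gF κ r ≤ 1 := by
  have hJ : 0 ≤ ∫ s in (0:ℝ)..min r (R1 κ), PhiF κ s / phiF κ s :=
    integral_nonneg (le_min hr (R1_nonneg κ)) fun _ hs => PhiF_div_phiF_nonneg hs.1
  rw [gF]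
  linarith [mul_nonneg (cF_nonneg κ) hJ]

theorem continuousOn_gF (hκ : ContinuousOn κ (Ici 0)) : ContinuousOn (gF κ) (Ici 0) := by
  have hJ : ContinuousOn (fun u => ∫ s in (0:ℝ)..u, PhiF κ s / phiF κ s) (Ici 0) := fun _ hu =>
    (hasDerivWithinAt_integral_Ici (continuousOn_PhiF_div_phiF hκ) hu).continuousWithinAt
  exact continuousOn_const.sub (continuousOn_const.mul (hJ.comp
    (continuous_id.min continuous_const).continuousOn fun _ hu => le_min hu (R1_nonneg κ)))

theorem hasDerivWithinAt_gF_of_lt_R1 (hκ : ContinuousOn κ (Ici 0)) (hr0 : 0 ≤ r)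
    (hr : r < R1 κ) :
    HasDerivWithinAt (gF κ) (-(cF κ / 2 * (PhiF κ r / phiF κ r))) (Ici 0) r := by
  have heq : ∀ s, s ≤ R1 κ →
      gF κ s = 1 - cF κ / 2 * ∫ t in (0:ℝ)..s, PhiF κ t / phiF κ t :=
    fun s hs => by rw [gF, min_eq_left hs]
  refine (((hasDerivWithinAt_integral_Ici (continuousOn_PhiF_div_phiF hκ) hr0).const_mul
    (cF κ / 2)).const_sub 1).congr_of_eventuallyEq ?_ (heq r hr.le)
  filter_upwards [mem_nhdsWithin_of_mem_nhds (Iic_mem_nhds hr)] with s hs using heq s hs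

theorem hasDerivWithinAt_gF_of_R1_lt (hκ : ContinuousOn κ (Ici 0)) (hR1 : 0 < R1 κ)
    (hr : R1 κ < r) : HasDerivWithinAt (gF κ) 0 (Ici 0) r :=
  ((hasDerivAt_const r (1 / 2 : ℝ)).congr_of_eventuallyEq (by
    filter_upwards [Ioi_mem_nhds hr] with s hs using gF_of_R1_le hκ hR1 hs.le)).hasDerivWithinAt

theorem continuousOn_phiF_mul_gF (hκ : ContinuousOn κ (Ici 0)) :
    ContinuousOn (fun s => phiF κ s * gF κ s) (Ici 0) :=
  (continuousOn_phiF hκ).mul (continuousOn_gF hκ)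

theorem fF_le_PhiF (hκ : ContinuousOn κ (Ici 0)) (hr : 0 ≤ r) : fF κ r ≤ PhiF κ r :=
  integral_mono_on hr ((continuousOn_phiF_mul_gF hκ).intervalIntegrable_of_Ici le_rfl hr)
    ((continuousOn_phiF hκ).intervalIntegrable_of_Ici le_rfl hr)
    fun s hs => mul_le_of_le_one_right (phiF_pos s).le (gF_le_one hs.1)

theorem exists_hasDerivWithinAt_phiF_mul_gF_of_lt_R1 (hκ : ContinuousOn κ (Ici 0))
    (hR1 : 0 < R1 κ) (hr0 : 0 ≤ r) (hr : r < R1 κ) :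
    ∃ f2 : ℝ, HasDerivWithinAt (fun s => phiF κ s * gF κ s) f2 (Ici 0) r ∧
      f2 - r * κ r * (phiF κ r * gF κ r) / 4 ≤ -cF κ * fF κ r / 2 := by
  refine ⟨_, (hasDerivWithinAt_phiF hκ hr0).mul (hasDerivWithinAt_gF_of_lt_R1 hκ hr0 hr), ?_⟩
  have hκ' : 0 ≤ max 0 (-κ r) + κ r := by linarith [le_max_right 0 (-κ r)]
  have hφg : 0 ≤ phiF κ r * gF κ r :=
    mul_nonneg (phiF_pos r).le (by linarith [one_half_le_gF hκ hR1 hr0])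
  have hΦ : phiF κ r * (cF κ / 2 * (PhiF κ r / phiF κ r)) = cF κ / 2 * PhiF κ r := by
    field_simp [(phiF_pos r).ne']
  have hf := mul_le_mul_of_nonneg_left (fF_le_PhiF hκ hr0) (cF_nonneg κ)
  nlinarith [mul_nonneg (mul_nonneg hr0 hκ') hφg]

theorem exists_hasDerivWithinAt_phiF_mul_gF_of_R1_lt (hκ : ContinuousOn κ (Ici 0))
    (hR1 : 0 < R1 κ) (hr : R1 κ < r) :
    ∃ f2 : ℝ, HasDerivWithinAt (fun s => phiF κ s * gF κ s) f2 (Ici 0) r ∧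
      f2 - r * κ r * (phiF κ r * gF κ r) / 4 ≤ -cF κ * fF κ r / 2 := by
  have h0 := R0_nonneg κ
  have hR0r : R0 κ < r := (R0_le_R1 hR1).trans_lt hr
  have hr0 : 0 ≤ r := h0.trans hR0r.le
  refine ⟨_, (hasDerivWithinAt_phiF hκ hr0).mul (hasDerivWithinAt_gF_of_R1_lt hκ hR1 hr), ?_⟩
  have hκr : 0 ≤ κ r := kappa_nonneg_of_R0_lt hR1 hR0r
  have hratio : 4 * (PhiF κ r / phiF κ r) ≤
      (∫ s in (0:ℝ)..R1 κ, PhiF κ s / phiF κ s) * (r * κ r) := by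
    rw [PhiF_div_phiF_eq_of_R0_le hκ hR1 hR0r.le]
    exact four_mul_add_sub_le_mul h0 (R0_le_R1 hR1) hr (le_PhiF_div_phiF hκ h0)
      (R1_sub_R0_mul_le_integral_PhiF_div_phiF hκ hR1) (eight_le_R1_mul_kappa hR1 hr)
  have hcf : cF κ * fF κ r ≤ phiF κ r * (r * κ r) / 4 :=
    calc cF κ * fF κ r ≤ cF κ * PhiF κ r :=
          mul_le_mul_of_nonneg_left (fF_le_PhiF hκ hr0) (cF_nonneg κ)
      _ = cF κ * phiF κ r * (PhiF κ r / phiF κ r) := by field_simp [(phiF_pos r).ne']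
      _ ≤ cF κ * phiF κ r * ((∫ s in (0:ℝ)..R1 κ, PhiF κ s / phiF κ s) * (r * κ r) / 4) :=
          mul_le_mul_of_nonneg_left (by linarith) (mul_nonneg (cF_nonneg κ) (phiF_pos r).le)
      _ = phiF κ r * (r * κ r) / 4 := by
          linear_combination (phiF κ r * (r * κ r) / 4) * cF_mul_integral_PhiF_div_phiF hκ hR1
  rw [max_eq_left (neg_nonpos.2 hκr), gF_of_R1_le hκ hR1 hr.le]
  linarith

end

theorem stmt6_general (κ : ℝ → ℝ) (hκcont : ContinuousOn κ (Set.Ici 0))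
    (hR1 : 0 < R1 κ) :
    ∀ r : ℝ, 0 ≤ r → r ≠ R1 κ →
      HasDerivWithinAt (fF κ) (phiF κ r * gF κ r) (Set.Ici 0) r ∧
      ∃ f2 : ℝ, HasDerivWithinAt (fun s => phiF κ s * gF κ s) f2 (Set.Ici 0) r ∧
        f2 - r * κ r * (phiF κ r * gF κ r) / 4 ≤ -(cF κ) * fF κ r / 2 := by
  intro r hr hne
  refine ⟨hasDerivWithinAt_integral_Ici (continuousOn_phiF_mul_gF hκcont) hr, ?_⟩
  rcases hne.lt_or_gt with hlt | hgt
  · exact exists_hasDerivWithinAt_phiF_mul_gF_of_lt_R1 hκcont hR1 hr hlt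
  · exact exists_hasDerivWithinAt_phiF_mul_gF_of_R1_lt hκcont hR1 hgt

/-- for every `r ≥ 0` with `r ≠ R₁`, the function `f` is twice differentiable at `r`
(differentiability within `[0,∞)`, i.e. one-sided at `r = 0`), with first derivative
`f'(r) = φ(r) g(r)`, and the second derivative `f''(r)` satisfies
`f''(r) − r κ(r) f'(r)/4 ≤ −c f(r)/2`. -/
theorem stmt6 (κ : ℝ → ℝ) (hκcont : ContinuousOn κ (Set.Ici 0))
    (hκliminf : ∃ ε > (0 : ℝ), ∃ R : ℝ, ∀ r ≥ R, ε ≤ κ r) (hR1 : 0 < R1 κ) :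
    ∀ r : ℝ, 0 ≤ r → r ≠ R1 κ →
      HasDerivWithinAt (fF κ) (phiF κ r * gF κ r) (Set.Ici 0) r ∧
      ∃ f2 : ℝ, HasDerivWithinAt (fun s => phiF κ s * gF κ s) f2 (Set.Ici 0) r ∧
        f2 - r * κ r * (phiF κ r * gF κ r) / 4 ≤ -(cF κ) * fF κ r / 2 :=
  stmt6_general κ hκcont hR1
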